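/- Let C be a category with finite limits satisfying Precoherent (so the coherent topology on C is defined, generated by finite effective epimorphic families), and let ŷ : C ⥤ Sheaf (coherentTopology C) (Type) be the sheafified Yoneda embedding. Let E and F be Grothendieck topoi, f^* ⊣ f_* an adjunction with f^* : F ⥤ E preserving finite limits and with f_* : E ⥤ F preserving finite coproducts and epimorphisms (a flat geometric morphism), and let x^* : Sheaf (coherentTopology C) (Type) ⥤ E preserve finite limits and small colimits. Then for every finite effective epimorphic family {p_i : c_i ⟶ c} in C, the images (f_* ∘ x^* ∘ ŷ).map p_i form a jointly epimorphic family in F. (Coherent topoi are formally coherent: this is the continuity step showing they are weakly right Kan injective with respect to flat geometric morphisms.) -/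

import Mathlib

universe u v

open CategoryTheory Limits

/-!
Every sheaf is separated for the covering sieve generated by an effective epimorphic family, so
through `Hom(ŷ c, Z) ≃ Z(c)` the family `ŷ pᵢ` is jointly epimorphic. A finite jointly epimorphic
family is one whose induced map out of the coproduct is epi, and `x^*` and `f_*` both preserve
finite coproducts and epimorphisms.
-/

namespace CategoryTheory

variable {C : Type*} [Category* C]

def JointlyEpi {ι : Type*} {Y : ι → C} {X : C} (f : ∀ i, Y i ⟶ X) : Prop :=
  ∀ ⦃Z : C⦄ (u v : X ⟶ Z), (∀ i, f i ≫ u = f i ≫ v) → u = v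

namespace JointlyEpi

variable {ι : Type*} {Y : ι → C} {X : C} {f : ∀ i, Y i ⟶ X}

theorem epi_sigmaDesc [HasCoproduct Y] (hf : JointlyEpi f) : Epi (Limits.Sigma.desc f) :=
  ⟨fun u v huv => hf u v fun i => by simpa using Sigma.ι Y i ≫= huv⟩

theorem map {D : Type*} [Category* D] (F : C ⥤ D) [F.PreservesEpimorphisms] [HasCoproduct Y]
    [PreservesColimit (Discrete.functor Y) F] (hf : JointlyEpi f) :
    JointlyEpi fun i => F.map (f i) := by
  intro Z u v h
  have := hf.epi_sigmaDesc
  rw [← cancel_epi (F.map (Limits.Sigma.desc f))]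
  refine Cofan.IsColimit.hom_ext (isColimitOfHasCoproductOfPreservesColimit F Y) _ _ fun i => ?_
  simpa [← F.map_comp_assoc] using h i

end JointlyEpi

section

variable {C : Type u} [Category.{v} C] (J : GrothendieckTopology C) [HasWeakSheafify J (Type v)]

noncomputable def sheafifiedYonedaEquiv (X : C) (Z : Sheaf J (Type v)) :
    ((yoneda ⋙ presheafToSheaf J (Type v)).obj X ⟶ Z) ≃ Z.obj.obj (Opposite.op X) :=
  ((sheafificationAdjunction J (Type v)).homEquiv _ _).trans yonedaEquiv

theorem sheafifiedYonedaEquiv_naturality {X X' : C} (g : X' ⟶ X) {Z : Sheaf J (Type v)}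
    (u : (yoneda ⋙ presheafToSheaf J (Type v)).obj X ⟶ Z) :
    sheafifiedYonedaEquiv J X' Z ((yoneda ⋙ presheafToSheaf J (Type v)).map g ≫ u) =
      Z.obj.map g.op (sheafifiedYonedaEquiv J X Z u) := by
  simp only [sheafifiedYonedaEquiv, Equiv.trans_apply, Functor.comp_map,
    Adjunction.homEquiv_naturality_left, yonedaEquiv_naturality]

theorem jointlyEpi_sheafifiedYoneda_map {ι : Type*} {Y : ι → C} {X : C} {f : ∀ i, Y i ⟶ X}
    (hf : Sieve.ofArrows Y f ∈ J X) :
    JointlyEpi fun i => (yoneda ⋙ presheafToSheaf J (Type v)).map (f i) := by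
  intro Z u v h
  have hsep : Presieve.IsSeparatedFor Z.obj (Presieve.ofArrows Y f) :=
    Presieve.isSeparatedFor_iff_generate.mpr
      (((isSheaf_iff_isSheaf_of_type J Z.obj).mp Z.property).isSeparated _ hf)
  apply (sheafifiedYonedaEquiv J X Z).injective
  refine hsep.ext fun _ _ ⟨i⟩ => ?_
  simp only [← sheafifiedYonedaEquiv_naturality, h i]

end

end CategoryTheory

theorem statement13_general {C : Type u} [SmallCategory C] [Precoherent C]
    {D₁ D₂ : Type u} [SmallCategory D₁] [SmallCategory D₂]
    (J : GrothendieckTopology D₁) (K : GrothendieckTopology D₂)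
    (fsub : Sheaf J (Type u) ⥤ Sheaf K (Type u))
    [PreservesFiniteCoproducts fsub] [fsub.PreservesEpimorphisms]
    (xstar : Sheaf (coherentTopology C) (Type u) ⥤ Sheaf J (Type u))
    [PreservesColimitsOfSize.{u, u} xstar]
    {α : Type} [Finite α] {c : C} (c' : α → C) (p : ∀ i, c' i ⟶ c)
    (hp : EffectiveEpiFamily c' p) :
    ∀ {Z : Sheaf K (Type u)}
      (u v : (((yoneda ⋙ presheafToSheaf (coherentTopology C) (Type u)) ⋙
        xstar ⋙ fsub).obj c) ⟶ Z),
      (∀ i, (((yoneda ⋙ presheafToSheaf (coherentTopology C) (Type u)) ⋙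
        xstar ⋙ fsub).map (p i)) ≫ u =
        (((yoneda ⋙ presheafToSheaf (coherentTopology C) (Type u)) ⋙
        xstar ⋙ fsub).map (p i)) ≫ v) → u = v := by
  have hŷ : JointlyEpi fun i =>
      (yoneda ⋙ presheafToSheaf (coherentTopology C) (Type u)).map (p i) :=
    jointlyEpi_sheafifiedYoneda_map _ <| coherentTopology.mem_sieves_of_hasEffectiveEpiFamily _
      ⟨α, inferInstance, c', p, hp, Sieve.ofArrows_mk _ _⟩
  have : HasColimitsOfShape (Discrete α) (Sheaf (coherentTopology C) (Type u)) :=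
    hasColimitsOfShape_discrete _ α
  have : PreservesColimitsOfSize.{0, 0} xstar := preservesColimitsOfSize_shrink xstar
  exact hŷ.map (xstar ⋙ fsub)

/-- Coherent topoi are formally coherent (continuity step): if `f^* ⊣ f_*` is a flat
geometric morphism (`f_*` preserves finite coproducts and epimorphisms) and `x^*` is a
point of the coherent topos `Sh(C, coherentTopology C)` in `E`, then the composite
`f_* ∘ x^* ∘ ŷ : C ⥤ F` sends every finite effective epimorphic family of `C` to a
jointly epimorphic family of `F`. -/
theorem statement13 {C : Type u} [SmallCategory C] [HasFiniteLimits C] [Precoherent C]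
    {D₁ D₂ : Type u} [SmallCategory D₁] [SmallCategory D₂]
    (J : GrothendieckTopology D₁) (K : GrothendieckTopology D₂)
    (fstar : Sheaf K (Type u) ⥤ Sheaf J (Type u))
    (fsub : Sheaf J (Type u) ⥤ Sheaf K (Type u))
    (adj : fstar ⊣ fsub) [PreservesFiniteLimits fstar]
    [PreservesFiniteCoproducts fsub] [fsub.PreservesEpimorphisms]
    (xstar : Sheaf (coherentTopology C) (Type u) ⥤ Sheaf J (Type u))
    [PreservesFiniteLimits xstar] [PreservesColimitsOfSize.{u, u} xstar]
    {α : Type} [Finite α] {c : C} (c' : α → C) (p : ∀ i, c' i ⟶ c)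
    (hp : EffectiveEpiFamily c' p) :
    ∀ {Z : Sheaf K (Type u)}
      (u v : (((yoneda ⋙ presheafToSheaf (coherentTopology C) (Type u)) ⋙
        xstar ⋙ fsub).obj c) ⟶ Z),
      (∀ i, (((yoneda ⋙ presheafToSheaf (coherentTopology C) (Type u)) ⋙
        xstar ⋙ fsub).map (p i)) ≫ u =
        (((yoneda ⋙ presheafToSheaf (coherentTopology C) (Type u)) ⋙
        xstar ⋙ fsub).map (p i)) ≫ v) → u = v :=
  statement13_general J K fsub xstar c' p hp
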